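/- Let (X,d) be a metric space equipped with a Borel measure m, let d_f ≥ 1, and suppose there exists C_V > 1 such that m(B(x,r)) ≤ C_V · max(r, r^{d_f}) for all x ∈ X and all r > 0. Then there exists a constant c₁ > 0, depending only on C_V and d_f, such that for every set E ⊆ X, the Hausdorff 1-content satisfies H¹_∞(E) ≥ c₁ · min(m(E)^{1/d_f}, m(E)). Equivalently: for every countable family of balls B(x_i, r_i), i ∈ I, whose union contains E, one has Σ_{i∈I} r_i ≥ c₁ · min(m(E)^{1/d_f}, m(E)). -/

import Mathlib

/-!
Let `S = Σ r_i` for a cover of `E` by balls `B(x_i, r_i)`. Since `r_i ≤ S` and `d_f ≥ 1`,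
`max(r_i, r_i^{d_f}) ≤ r_i · max(1, S^{d_f - 1})`; summing the volume bound over the cover gives
`m(E) ≤ C_V · max(S, S^{d_f})`, which inverts to `min(m(E)^{1/d_f}, m(E)) ≤ C_V · S`.
Hence `c₁ = C_V⁻¹` works, for every cover and so for the content.
-/

open scoped ENNReal

/-- Hausdorff `1`-content: `H¹_∞(E) = inf Σ_i r_i` over countable covers of `E`
by balls `B(x_i, r_i)`. -/
noncomputable def hausdorffContent1 {X : Type} [MetricSpace X] (E : Set X) : ℝ≥0∞ :=
  ⨅ (c : ℕ → X × ℝ) (_ : E ⊆ ⋃ i, Metric.ball (c i).1 (c i).2),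
    ∑' i, ENNReal.ofReal (c i).2

open MeasureTheory Metric

namespace ENNReal

variable {p : ℝ}

lemma rpow_eq_mul_rpow_sub_one (hp : 1 ≤ p) (a : ℝ≥0∞) : a ^ p = a * a ^ (p - 1) := by
  have h := rpow_add_of_nonneg (x := a) 1 (p - 1) zero_le_one (by linarith)
  rwa [rpow_one, add_sub_cancel] at h

lemma max_self_rpow_le_mul (hp : 1 ≤ p) {a S : ℝ≥0∞} (haS : a ≤ S) :
    max a (a ^ p) ≤ a * max 1 (S ^ (p - 1)) := by
  rw [mul_max, mul_one, rpow_eq_mul_rpow_sub_one hp]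
  gcongr

lemma mul_max_one_rpow_sub_one (hp : 1 ≤ p) (S : ℝ≥0∞) :
    S * max 1 (S ^ (p - 1)) = max S (S ^ p) := by
  rw [mul_max, mul_one, ← rpow_eq_mul_rpow_sub_one hp]

lemma min_rpow_one_div_le_mul (hp : 1 ≤ p) {C μ S : ℝ≥0∞} (hC : 1 ≤ C)
    (hμ : μ ≤ C * max S (S ^ p)) : min (μ ^ (1 / p)) μ ≤ C * S := by
  rcases max_choice S (S ^ p) with hmax | hmax <;> rw [hmax] at hμ
  · exact (min_le_right _ _).trans hμ
  · have hp0 : 0 < p := zero_lt_one.trans_le hp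
    calc min (μ ^ (1 / p)) μ ≤ (C * S ^ p) ^ (1 / p) :=
          (min_le_left _ _).trans (rpow_le_rpow hμ (by positivity))
      _ = C ^ (1 / p) * S := by
          rw [mul_rpow_of_nonneg _ _ (by positivity), one_div, rpow_rpow_inv hp0.ne']
      _ ≤ C * S := by
          gcongr
          calc C ^ (1 / p) ≤ C ^ (1 : ℝ) :=
                rpow_le_rpow_of_exponent_le hC ((div_le_one hp0).2 hp)
            _ = C := rpow_one C

end ENNReal

lemma measure_le_mul_max_tsum_of_subset_iUnion_ball {X ι : Type*} [PseudoMetricSpace X]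
    [MeasurableSpace X] [Countable ι] {m : Measure X} {p : ℝ} (hp : 1 ≤ p) {C : ℝ≥0∞}
    (hvol : ∀ (x : X) (r : ℝ), 0 < r →
      m (ball x r) ≤ C * max (.ofReal r) (.ofReal r ^ p))
    {E : Set X} {x : ι → X} {r : ι → ℝ} (hcov : E ⊆ ⋃ i, ball (x i) (r i)) :
    m E ≤ C * max (∑' i, .ofReal (r i)) ((∑' i, .ofReal (r i)) ^ p) := by
  set S := ∑' i, ENNReal.ofReal (r i)
  have hball : ∀ i, m (ball (x i) (r i)) ≤ C * max 1 (S ^ (p - 1)) * .ofReal (r i) := by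
    intro i
    rcases le_or_gt (r i) 0 with hr | hr
    · simp [ball_eq_empty.2 hr]
    · calc m (ball (x i) (r i)) ≤ C * max (.ofReal (r i)) (.ofReal (r i) ^ p) := hvol _ _ hr
        _ ≤ C * (.ofReal (r i) * max 1 (S ^ (p - 1))) := by
            gcongr; exact ENNReal.max_self_rpow_le_mul hp (ENNReal.le_tsum i)
        _ = C * max 1 (S ^ (p - 1)) * .ofReal (r i) := by ring
  calc m E ≤ ∑' i, m (ball (x i) (r i)) := (measure_mono hcov).trans (measure_iUnion_le _)
    _ ≤ ∑' i, C * max 1 (S ^ (p - 1)) * .ofReal (r i) := ENNReal.tsum_le_tsum hball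
    _ = C * max S (S ^ p) := by
        rw [ENNReal.tsum_mul_left, mul_assoc, mul_comm _ S, ENNReal.mul_max_one_rpow_sub_one hp]

theorem content_one_lower_bound_general
    {X : Type} [MetricSpace X] [MeasurableSpace X]
    (m : MeasureTheory.Measure X) (df : ℝ) (hdf : 1 ≤ df)
    (CV : ℝ) (hCV : 1 < CV)
    (hvol : ∀ (x : X) (r : ℝ), 0 < r →
      m (Metric.ball x r) ≤ ENNReal.ofReal (CV * max r (r ^ df))) :
    ∃ c₁ > (0 : ℝ), ∀ E : Set X,
      (ENNReal.ofReal c₁ * min (m E ^ (1 / df)) (m E) ≤ hausdorffContent1 E) ∧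
      ∀ (ι : Type) (_ : Countable ι) (x : ι → X) (r : ι → ℝ),
        E ⊆ ⋃ i, Metric.ball (x i) (r i) →
        ENNReal.ofReal c₁ * min (m E ^ (1 / df)) (m E) ≤ ∑' i, ENNReal.ofReal (r i) := by
  have hCV0 : 0 < CV := zero_lt_one.trans hCV
  have hvol_ennreal (x : X) (r : ℝ) (hr : 0 < r) :
      m (ball x r) ≤ .ofReal CV * max (.ofReal r) (.ofReal r ^ df) := by
    rw [ENNReal.ofReal_rpow_of_nonneg hr.le (by linarith), ← ENNReal.ofReal_max,
      ← ENNReal.ofReal_mul hCV0.le]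
    exact hvol x r hr
  have hcover (E : Set X) (ι : Type) [Countable ι] (x : ι → X) (r : ι → ℝ)
      (hcov : E ⊆ ⋃ i, ball (x i) (r i)) :
      ENNReal.ofReal CV⁻¹ * min (m E ^ (1 / df)) (m E) ≤ ∑' i, ENNReal.ofReal (r i) := by
    rw [ENNReal.ofReal_inv_of_pos hCV0, ENNReal.inv_mul_le_iff (by simpa using hCV0)
      ENNReal.ofReal_ne_top]
    exact ENNReal.min_rpow_one_div_le_mul hdf (ENNReal.one_le_ofReal.2 hCV.le)
      (measure_le_mul_max_tsum_of_subset_iUnion_ball hdf hvol_ennreal hcov)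
  exact ⟨CV⁻¹, inv_pos.2 hCV0, fun E =>
    ⟨le_iInf₂ fun c hc => hcover E ℕ (fun i => (c i).1) (fun i => (c i).2) hc,
      fun ι _ x r => hcover E ι x r⟩⟩

/-- Lemma 3.3: if `m(B(x,r)) ≤ C_V max(r, r^{d_f})`, then
`H¹_∞(E) ≥ c₁ min(m(E)^{1/d_f}, m(E))` for every `E ⊆ X`; equivalently, every countable
cover of `E` by balls `B(x_i, r_i)` satisfies `Σ_i r_i ≥ c₁ min(m(E)^{1/d_f}, m(E))`. -/
theorem content_one_lower_bound
    {X : Type} [MetricSpace X] [MeasurableSpace X] [BorelSpace X]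
    (m : MeasureTheory.Measure X) (df : ℝ) (hdf : 1 ≤ df)
    (CV : ℝ) (hCV : 1 < CV)
    (hvol : ∀ (x : X) (r : ℝ), 0 < r →
      m (Metric.ball x r) ≤ ENNReal.ofReal (CV * max r (r ^ df))) :
    ∃ c₁ > (0 : ℝ), ∀ E : Set X,
      (ENNReal.ofReal c₁ * min (m E ^ (1 / df)) (m E) ≤ hausdorffContent1 E) ∧
      ∀ (ι : Type) (_ : Countable ι) (x : ι → X) (r : ι → ℝ),
        E ⊆ ⋃ i, Metric.ball (x i) (r i) →
        ENNReal.ofReal c₁ * min (m E ^ (1 / df)) (m E) ≤ ∑' i, ENNReal.ofReal (r i) :=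
  content_one_lower_bound_general m df hdf CV hCV hvol
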